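/- Let B be a Boolean network with n gates, let v be a gate and t ≥ 0, and assume that N_+^t(v) induces a tree rooted at v in ⟨V,E⟩: every gate u ∈ N_+^t(v) is the endpoint of exactly one directed path of length at most t in E starting at v, and the only edges of E between gates of N_+^t(v) are the edges of these paths. Then for any s ≤ t, any state x ∈ {0,1}^n, and any gate u ∈ S_+^s(v): v affects u at time s on input x if and only if either (1) s = 0 and u = v, or (2) s > 0 and, letting w be the unique gate in S_+^{s−1}(v) ∩ S_-^1(u), v affects w at time s−1 on input x and w directly affects u on input B^{s−1}(x). -/

import Mathlib

/-- A Boolean network with `n` gates: each gate `v` has an indegree, a strictly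
increasing sequence of in-gates, and a Boolean function of that many arguments. -/
structure BoolNetwork (n : ℕ) where
  indeg : Fin n → ℕ
  inGates : (v : Fin n) → Fin (indeg v) → Fin n
  inGates_strictMono : ∀ v, StrictMono (inGates v)
  f : (v : Fin n) → (Fin (indeg v) → Bool) → Bool

namespace BoolNetwork

variable {n : ℕ}

/-- `(u, v) ∈ E` iff `u` is an in-gate of `v`. -/
def Edge (B : BoolNetwork n) (u v : Fin n) : Prop := ∃ i, B.inGates v i = u

/-- The synchronous update map of the network. -/
def step (B : BoolNetwork n) (x : Fin n → Bool) : Fin n → Bool :=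
  fun v => B.f v (fun i => x (B.inGates v i))

/-- `B.iter t x` is the state of the network at time `t` starting from state `x`. -/
def iter (B : BoolNetwork n) (t : ℕ) : (Fin n → Bool) → (Fin n → Bool) := B.step^[t]

/-- `x^v`: the state `x` with the `v`-th coordinate flipped. -/
def flip (x : Fin n → Bool) (v : Fin n) : Fin n → Bool :=
  Function.update x v (! x v)

/-- `S_+^t(v)`: the set of gates at the ends of directed paths
of length exactly `t` that start at `v`. -/
def Splus (B : BoolNetwork n) : ℕ → Fin n → Set (Fin n)
  | 0, v => {v}
  | t + 1, v => {u | ∃ w ∈ B.Splus t v, B.Edge w u}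

/-- `N_+^t(v) = ⋃_{s ≤ t} S_+^s(v)`: the out-neighborhood of `v` of radius `t`. -/
def Nplus (B : BoolNetwork n) (t : ℕ) (v : Fin n) : Set (Fin n) :=
  {u | ∃ s ≤ t, u ∈ B.Splus s v}

/-- Gate `v` affects gate `u` at time `t` on input `x`: `B_u^t(x) ≠ B_u^t(x^v)`. -/
def Affects (B : BoolNetwork n) (v u : Fin n) (t : ℕ) (x : Fin n → Bool) : Prop :=
  B.iter t x u ≠ B.iter t (flip x v) u

/-- Gate `w` directly affects gate `u` on input `y`: `B_u(y) ≠ B_u(y^w)`. -/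
def DirectlyAffects (B : BoolNetwork n) (w u : Fin n) (y : Fin n → Bool) : Prop :=
  B.step y u ≠ B.step (flip y w) u

/-- A directed path of length `l.length - 1` in the network, recorded as the list of
its successive gates. -/
def IsPathList (B : BoolNetwork n) (l : List (Fin n)) : Prop :=
  l.Chain' B.Edge

/-- `N_+^t(v)` induces a tree rooted at `v`: every gate of `N_+^t(v)` is the endpoint
of exactly one directed path of length at most `t` starting at `v`, and every edge
between gates of `N_+^t(v)` lies on one of these paths. -/
def TreeOn (B : BoolNetwork n) (t : ℕ) (v : Fin n) : Prop :=
  (∀ u ∈ B.Nplus t v, ∃! l : List (Fin n),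
      B.IsPathList l ∧ l.head? = some v ∧ l.getLast? = some u ∧ l.length ≤ t + 1) ∧
  (∀ w ∈ B.Nplus t v, ∀ u ∈ B.Nplus t v, B.Edge w u →
      ∃ l : List (Fin n), B.IsPathList l ∧ l.head? = some v ∧ l.length ≤ t + 1 ∧
        [w, u] <:+: l)

end BoolNetwork

/-!
A change at `v` can only reach `u` at time `s + 1` through an in-gate of `u` that is itself
affected at time `s`, and every affected gate at time `s` lies in `S_+^s(v)`. When `N_+^t(v)`
is a tree, `u ∈ S_+^{s+1}(v)` has a single in-gate `w` in `S_+^s(v)`, since two of them would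
give two paths from `v` to `u`. So at time `s` the states started from `x` and from `x^v` agree
on the in-gates of `u` except possibly at `w`, where they differ exactly when `v` affects `w`;
in that case the perturbed state looks, to `u`, like `B^s(x)` with `w` flipped.
-/

namespace BoolNetwork

variable {n : ℕ}

section Flip

@[simp]
lemma flip_apply_self (y : Fin n → Bool) (w : Fin n) : flip y w w = !y w :=
  Function.update_self _ _ _

lemma flip_apply_of_ne (y : Fin n → Bool) {w g : Fin n} (h : g ≠ w) : flip y w g = y g :=
  Function.update_of_ne h _ _

lemma flip_apply_eq_of_ne_of_eq_off {y z : Fin n → Bool} {w g : Fin n} (hw : y w ≠ z w)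
    (hg : g ≠ w → y g = z g) : flip y w g = z g := by
  by_cases h : g = w
  · subst h
    rw [flip_apply_self, Bool.not_eq.mpr hw]
  · rw [flip_apply_of_ne y h, hg h]

end Flip

variable (B : BoolNetwork n)

lemma iter_succ_apply (s : ℕ) (x : Fin n → Bool) : B.iter (s + 1) x = B.step (B.iter s x) :=
  Function.iterate_succ_apply' B.step s x

lemma step_apply_eq_of_inGates {y z : Fin n → Bool} {u : Fin n}
    (h : ∀ i, y (B.inGates u i) = z (B.inGates u i)) : B.step y u = B.step z u :=
  congrArg (B.f u) (funext h)

lemma affects_zero_self (v : Fin n) (x : Fin n → Bool) : B.Affects v v 0 x := by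
  simp [Affects, iter]

lemma exists_inGate_affects_of_affects_succ {v u : Fin n} {s : ℕ} {x : Fin n → Bool} :
    B.Affects v u (s + 1) x → ∃ i, B.Affects v (B.inGates u i) s x := by
  rw [Affects, iter_succ_apply, iter_succ_apply]
  contrapose!
  exact fun h => B.step_apply_eq_of_inGates fun i => not_not.mp (h i)

lemma mem_Splus_of_affects {v u : Fin n} {s : ℕ} {x : Fin n → Bool}
    (h : B.Affects v u s x) : u ∈ B.Splus s v := by
  induction s generalizing u with
  | zero =>
    by_contra huv
    exact h (by simp [iter, flip_apply_of_ne x (huv : u ≠ v)])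
  | succ s ih =>
    obtain ⟨i, hi⟩ := B.exists_inGate_affects_of_affects_succ h
    exact ⟨B.inGates u i, ih hi, i, rfl⟩

lemma affects_succ_iff_of_inGates {v u w : Fin n} {s : ℕ} {x : Fin n → Bool}
    (hother : ∀ i, B.inGates u i ≠ w → ¬ B.Affects v (B.inGates u i) s x) :
    B.Affects v u (s + 1) x ↔ B.Affects v w s x ∧ B.DirectlyAffects w u (B.iter s x) := by
  have hoff : ∀ i, B.inGates u i ≠ w →
      B.iter s x (B.inGates u i) = B.iter s (flip x v) (B.inGates u i) :=
    fun i hi => not_not.mp (hother i hi)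
  by_cases hw : B.Affects v w s x
  · have hstep : B.step (B.iter s (flip x v)) u = B.step (flip (B.iter s x) w) u :=
      (B.step_apply_eq_of_inGates fun i => flip_apply_eq_of_ne_of_eq_off hw (hoff i)).symm
    rw [Affects, iter_succ_apply, iter_succ_apply, hstep]
    exact (and_iff_right hw).symm
  · refine iff_of_false (fun hu => ?_) fun h => hw h.1
    obtain ⟨i, hi⟩ := B.exists_inGate_affects_of_affects_succ hu
    by_cases hiw : B.inGates u i = w
    · exact hw (hiw ▸ hi)
    · exact hother i hiw hi

variable {B} in
lemma IsPathList.concat {l : List (Fin n)} {w u : Fin n} (hl : B.IsPathList l)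
    (hw : l.getLast? = some w) (hwu : B.Edge w u) : B.IsPathList (l ++ [u]) :=
  List.IsChain.append hl (List.isChain_singleton u) fun a ha b hb => by
    simp_all

lemma exists_pathList_of_mem_Splus {s : ℕ} {v u : Fin n} (h : u ∈ B.Splus s v) :
    ∃ l : List (Fin n), B.IsPathList l ∧ l.head? = some v ∧
      l.getLast? = some u ∧ l.length = s + 1 := by
  induction s generalizing u with
  | zero => exact ⟨[u], List.isChain_singleton u, congrArg some (h : u = v), rfl, rfl⟩
  | succ s ih =>
    obtain ⟨w, hw, hwu⟩ := h
    obtain ⟨l, hl, hhead, hlast, hlen⟩ := ih hw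
    have hne : l ≠ [] := List.ne_nil_of_length_eq_add_one hlen
    refine ⟨l ++ [u], hl.concat hlast hwu, ?_, List.getLast?_concat, ?_⟩
    · rw [List.head?_append_of_ne_nil _ hne, hhead]
    · simp [hlen]

variable {B} in
lemma TreeOn.eq_of_mem_Splus_of_edge {t s : ℕ} {v u w₁ w₂ : Fin n} (htree : B.TreeOn t v)
    (hs : s + 1 ≤ t) (hw₁ : w₁ ∈ B.Splus s v) (hw₁u : B.Edge w₁ u)
    (hw₂ : w₂ ∈ B.Splus s v) (hw₂u : B.Edge w₂ u) : w₁ = w₂ := by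
  have hu : u ∈ B.Nplus t v := ⟨s + 1, hs, w₁, hw₁, hw₁u⟩
  obtain ⟨L, -, huniq⟩ := htree.1 u hu
  have hpath : ∀ w ∈ B.Splus s v, B.Edge w u →
      ∃ l : List (Fin n), l ++ [u] = L ∧ l.getLast? = some w := by
    intro w hw hwu
    obtain ⟨l, hl, hhead, hlast, hlen⟩ := B.exists_pathList_of_mem_Splus hw
    refine ⟨l, huniq _ ⟨hl.concat hlast hwu, ?_, List.getLast?_concat, ?_⟩, hlast⟩
    · rw [List.head?_append_of_ne_nil _ (List.ne_nil_of_length_eq_add_one hlen), hhead]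
    · simp only [List.length_append, List.length_singleton, hlen]
      omega
  obtain ⟨l₁, hL₁, hlast₁⟩ := hpath w₁ hw₁ hw₁u
  obtain ⟨l₂, hL₂, hlast₂⟩ := hpath w₂ hw₂ hw₂u
  rw [List.append_cancel_right (hL₁.trans hL₂.symm), hlast₂] at hlast₁
  exact Option.some_injective _ hlast₁.symm

end BoolNetwork

/-- If `N_+^t(v)` induces a tree rooted at `v`, then for any `s ≤ t`, any input `x`,
and any gate `u ∈ S_+^s(v)`: `v` affects `u` at time `s` on input `x` iff either
`s = 0` and `u = v`, or `s > 0` and, letting `w` be the unique gate in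
`S_+^{s-1}(v) ∩ S_-^1(u)`, `v` affects `w` at time `s-1` on input `x` and `w`
directly affects `u` on input `B^{s-1}(x)`. -/
theorem affects_iff_of_tree {n : ℕ} (B : BoolNetwork n) (v : Fin n) (t : ℕ)
    (htree : B.TreeOn t v) :
    ∀ s ≤ t, ∀ x : Fin n → Bool, ∀ u ∈ B.Splus s v,
      B.Affects v u s x ↔
        (s = 0 ∧ u = v) ∨
        (0 < s ∧ ∃ w : Fin n,
          (∀ w' : Fin n, (w' ∈ B.Splus (s - 1) v ∧ B.Edge w' u) ↔ w' = w) ∧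
          B.Affects v w (s - 1) x ∧
          B.DirectlyAffects w u (B.iter (s - 1) x)) := by
  rintro (_ | s) hs x u hu
  · obtain rfl : u = v := hu
    simpa using B.affects_zero_self u x
  · obtain ⟨w, hw, hwu⟩ := hu
    have hpred : ∀ w', (w' ∈ B.Splus s v ∧ B.Edge w' u) ↔ w' = w := fun w' =>
      ⟨fun h => htree.eq_of_mem_Splus_of_edge hs h.1 h.2 hw hwu, fun h => h ▸ ⟨hw, hwu⟩⟩
    have hother : ∀ i, B.inGates u i ≠ w → ¬ B.Affects v (B.inGates u i) s x :=
      fun i hiw hi => hiw ((hpred _).mp ⟨B.mem_Splus_of_affects hi, i, rfl⟩)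
    simp only [Nat.add_sub_cancel, Nat.succ_pos, true_and, Nat.add_one_ne_zero, false_and,
      false_or, B.affects_succ_iff_of_inGates hother]
    exact ⟨fun h => ⟨w, hpred, h⟩, fun ⟨w', hw', h⟩ => (hw' w).mp ⟨hw, hwu⟩ ▸ h⟩
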